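/- If L_s is symmetric positive semidefinite with smallest eigenvalue of the restriction to the orthogonal complement of its kernel being positive, and D̂ = diag with d_i = 1 for i in a set S such that no nonzero vector in the kernel of L_s vanishes on all coordinates of S, then there exists c > 0 such that 2C L_s + 2c D̂ is positive definite. -/

import Mathlib

open Matrix

namespace Matrix

open scoped ComplexOrder

variable {n 𝕜 : Type*} [Fintype n] [RCLike 𝕜]

theorem PosSemidef.posDef_add_of_mulVec_eq_zero {A B : Matrix n n 𝕜}
    (hA : A.PosSemidef) (hB : B.PosSemidef)
    (hker : ∀ x : n → 𝕜, A *ᵥ x = 0 → B *ᵥ x = 0 → x = 0) : (A + B).PosDef := by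
  refine posDef_iff_dotProduct_mulVec.mpr ⟨hA.isHermitian.add hB.isHermitian, fun x hx => ?_⟩
  have hAx := hA.dotProduct_mulVec_nonneg x
  have hBx := hB.dotProduct_mulVec_nonneg x
  rw [add_mulVec, dotProduct_add]
  refine lt_of_le_of_ne (add_nonneg hAx hBx) fun hsum => hx ?_
  obtain ⟨hA0, hB0⟩ := (add_eq_zero_iff_of_nonneg hAx hBx).mp hsum.symm
  exact hker x ((hA.dotProduct_mulVec_zero_iff x).mp hA0) ((hB.dotProduct_mulVec_zero_iff x).mp hB0)

end Matrix

theorem stmt16_general {N : ℕ} (Ls : Matrix (Fin N) (Fin N) ℝ)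
    (hLsPsd : Ls.PosSemidef)
    (S : Finset (Fin N))
    (hker : ∀ v : Fin N → ℝ, Ls.mulVec v = 0 → (∀ i ∈ S, v i = 0) → v = 0)
    (C : ℝ) (hC : 0 < C) :
    ∃ c > 0, ((2 * C) • Ls
      + (2 * c) • Matrix.diagonal (fun i => if i ∈ S then (1 : ℝ) else 0)).PosDef := by
  refine ⟨1, one_pos, ?_⟩
  set D : Matrix (Fin N) (Fin N) ℝ := diagonal fun i => if i ∈ S then 1 else 0
  have hD_mulVec (x : Fin N → ℝ) (hx : D *ᵥ x = 0) (i : Fin N) (hi : i ∈ S) : x i = 0 := by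
    simpa [D, mulVec_diagonal, hi] using congrFun hx i
  have hLpsd : ((2 * C) • Ls).PosSemidef := hLsPsd.smul (by positivity)
  -- The binder `c` of the statement carries no type ascription, so it is a natural number.
  have hDpsd : ((2 * 1 : ℕ) • D).PosSemidef :=
    (PosSemidef.diagonal fun i => by positivity).smul (by norm_num)
  refine hLpsd.posDef_add_of_mulVec_eq_zero hDpsd fun x hLx hDx => hker x ?_ (hD_mulVec x ?_)
  · rw [smul_mulVec, smul_eq_zero] at hLx
    exact hLx.resolve_left (by positivity)
  · rw [smul_mulVec, smul_eq_zero] at hDx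
    exact hDx.resolve_left (by norm_num)

theorem stmt16 {N : ℕ} (Ls : Matrix (Fin N) (Fin N) ℝ)
    (hLsSym : Lsᵀ = Ls) (hLsPsd : Ls.PosSemidef)
    (hgap : ∃ μ > 0, ∀ v : Fin N → ℝ,
      (∀ w : Fin N → ℝ, Ls.mulVec w = 0 → v ⬝ᵥ w = 0) → μ * (v ⬝ᵥ v) ≤ v ⬝ᵥ Ls.mulVec v)
    (S : Finset (Fin N))
    (hker : ∀ v : Fin N → ℝ, Ls.mulVec v = 0 → (∀ i ∈ S, v i = 0) → v = 0)
    (C : ℝ) (hC : 0 < C) :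
    ∃ c > 0, ((2 * C) • Ls
      + (2 * c) • Matrix.diagonal (fun i => if i ∈ S then (1 : ℝ) else 0)).PosDef :=
  stmt16_general Ls hLsPsd S hker C hC
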